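/- arXiv:1403.6241 — 5 statements merged into one kernel-verified Lean document; each statement's English description precedes it below -/
import Mathlib

section
/- Let u be a real number with 0 ≤ u, let n be a natural number with n·u < 1, let δ_1, …, δ_n be real numbers with |δ_i| ≤ u for every i, and let ρ_1, …, ρ_n ∈ {−1, +1}. Then there exists a real number θ with |θ| ≤ n·u/(1 − n·u) such that ∏_{i=1}^n (1 + δ_i)^{ρ_i} = 1 + θ. -/
/-!
Every factor `(1 + δᵢ)^{±1}` lies in the interval `[1 - u, (1 - u)⁻¹]`, which is closed under
inversion. Multiplying the `n` factors lands the product in `[(1 - u)ⁿ, (1 - u)⁻ⁿ]`, and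
Bernoulli's inequality `1 - n u ≤ (1 - u)ⁿ` widens this to `[1 - n u, (1 - n u)⁻¹]`, whose
points are within `(1 - n u)⁻¹ - 1 = n u / (1 - n u)` of `1`.
-/

open Finset Set

section IccSelfInv

variable {K : Type*} [Field K] [LinearOrder K] [IsStrictOrderedRing K] {a b x : K}

theorem inv_mem_Icc_self_inv (ha : 0 < a) (hx : x ∈ Icc a a⁻¹) : x⁻¹ ∈ Icc a a⁻¹ :=
  ⟨by simpa using inv_anti₀ (ha.trans_le hx.1) hx.2, inv_anti₀ ha hx.1⟩

theorem zpow_mem_Icc_self_inv {ρ : ℤ} (ha : 0 < a) (hx : x ∈ Icc a a⁻¹) (hρ : ρ = 1 ∨ ρ = -1) :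
    x ^ ρ ∈ Icc a a⁻¹ := by
  rcases hρ with rfl | rfl
  · simpa using hx
  · simpa using inv_mem_Icc_self_inv ha hx

theorem one_add_mem_Icc_one_sub_inv {u δ : K} (hu : u < 1) (hδ : |δ| ≤ u) :
    1 + δ ∈ Icc (1 - u) (1 - u)⁻¹ := by
  obtain ⟨hδl, hδu⟩ := abs_le.mp hδ
  refine ⟨by linarith, ?_⟩
  rw [← one_div, le_div_iff₀ (sub_pos.2 hu)]
  nlinarith

theorem prod_mem_Icc_pow_inv {ι : Type*} {s : Finset ι} {f : ι → K} (ha : 0 < a)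
    (hf : ∀ i ∈ s, f i ∈ Icc a a⁻¹) : ∏ i ∈ s, f i ∈ Icc (a ^ #s) (a ^ #s)⁻¹ := by
  rw [← inv_pow, ← prod_const, ← prod_const]
  exact ⟨prod_le_prod (fun _ _ ↦ ha.le) fun i hi ↦ (hf i hi).1,
    prod_le_prod (fun i hi ↦ ha.le.trans (hf i hi).1) fun i hi ↦ (hf i hi).2⟩

theorem Icc_self_inv_subset (hb : 0 < b) (hba : b ≤ a) : Icc a a⁻¹ ⊆ Icc b b⁻¹ :=
  Icc_subset_Icc hba (inv_anti₀ hb hba)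

theorem abs_sub_one_le_of_mem_Icc_self_inv (hb : 0 < b) (hb1 : b ≤ 1) (hx : x ∈ Icc b b⁻¹) :
    |x - 1| ≤ (1 - b) / b := by
  have hgap : (1 - b) / b = b⁻¹ - 1 := by field_simp
  have hle : 1 - b ≤ (1 - b) / b := le_div_self (by linarith) hb hb1
  rw [abs_le]
  constructor <;> linarith [hx.1, hx.2]

end IccSelfInv

/-- Higham's accumulation lemma (Lemma 3.1): a product of factors
`(1 + δᵢ)^{ρᵢ}` with `|δᵢ| ≤ u`, `ρᵢ = ±1`, and `n·u < 1` equals `1 + θ`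
with `|θ| ≤ γₙ := n·u/(1 − n·u)`. -/
theorem higham_accumulation (u : ℝ) (hu : 0 ≤ u) (n : ℕ) (hnu : (n : ℝ) * u < 1)
    (δ : Fin n → ℝ) (hδ : ∀ i, |δ i| ≤ u)
    (ρ : Fin n → ℤ) (hρ : ∀ i, ρ i = 1 ∨ ρ i = -1) :
    ∃ θ : ℝ, |θ| ≤ (n : ℝ) * u / (1 - (n : ℝ) * u) ∧
      ∏ i, (1 + δ i) ^ (ρ i) = 1 + θ := by
  rcases n.eq_zero_or_pos with rfl | hn
  · exact ⟨0, by simp, by simp⟩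
  have hu1 : u < 1 := (le_mul_of_one_le_left hu (by exact_mod_cast hn)).trans_lt hnu
  have hfactor : ∀ i ∈ Finset.univ, (1 + δ i) ^ ρ i ∈ Icc (1 - u) (1 - u)⁻¹ := fun i _ ↦
    zpow_mem_Icc_self_inv (sub_pos.2 hu1) (one_add_mem_Icc_one_sub_inv hu1 (hδ i)) (hρ i)
  have hbernoulli : 1 - n * u ≤ (1 - u) ^ n := by
    simpa [sub_eq_add_neg] using one_add_mul_le_pow (by linarith : (-2 : ℝ) ≤ -u) n
  have hprod : ∏ i, (1 + δ i) ^ ρ i ∈ Icc (1 - n * u) (1 - n * u)⁻¹ :=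
    Icc_self_inv_subset (by linarith) hbernoulli
      (by simpa using prod_mem_Icc_pow_inv (sub_pos.2 hu1) hfactor)
  refine ⟨∏ i, (1 + δ i) ^ ρ i - 1, ?_, by ring⟩
  simpa using abs_sub_one_le_of_mem_Icc_self_inv (by linarith) (sub_le_self 1 (by positivity)) hprod
end

section
/- Let u be a real number with 0 ≤ u < 1/2, let t be a natural number, let m be a natural number with m ≤ 2^{t+1}, and let δ_1, …, δ_m be real numbers with |δ_i| ≤ u for all i. Then there exists a real number θ with |θ| ≤ 2u/(1 − 2u) such that ∏_{i=1}^m (1 + δ_i) = (1 + θ)^{2^t}. -/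
/-- Regrouping step in the Precision Hierarchy Theorem: a product of at most
`2^{t+1}` factors `(1+δᵢ)` with `|δᵢ| ≤ u < 1/2` can be written as
`(1+θ)^{2^t}` with `|θ| ≤ γ₂ = 2u/(1−2u)`. -/
theorem regroup_product (u : ℝ) (hu0 : 0 ≤ u) (hu : u < 1 / 2)
    (t m : ℕ) (hm : m ≤ 2 ^ (t + 1))
    (δ : Fin m → ℝ) (hδ : ∀ i, |δ i| ≤ u) :
    ∃ θ : ℝ, |θ| ≤ 2 * u / (1 - 2 * u) ∧
      ∏ i, (1 + δ i) = (1 + θ) ^ (2 ^ t) := by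
  set P : ℝ := ∏ i, (1 + δ i) with hP
  have hu1 : u < 1 := by linarith
  have hfac_lo : ∀ i : Fin m, 1 - u ≤ 1 + δ i := fun i => by
    have := (abs_le.mp (hδ i)).1; linarith
  have hfac_hi : ∀ i : Fin m, 1 + δ i ≤ 1 + u := fun i => by
    have := (abs_le.mp (hδ i)).2; linarith
  have h1u : (0:ℝ) < 1 - u := by linarith
  have hP0 : 0 < P := Finset.prod_pos (fun i _ => lt_of_lt_of_le h1u (hfac_lo i))
  -- bounds on P
  have hPhi : P ≤ (1 + u) ^ (2 ^ (t + 1)) := by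
    have h1 : P ≤ ∏ _i : Fin m, (1 + u) :=
      Finset.prod_le_prod (fun i _ => le_trans h1u.le (hfac_lo i)) (fun i _ => hfac_hi i)
    simp only [Finset.prod_const, Finset.card_univ, Fintype.card_fin] at h1
    exact h1.trans (pow_le_pow_right₀ (by linarith) hm)
  have hPlo : (1 - u) ^ (2 ^ (t + 1)) ≤ P := by
    calc (1 - u) ^ (2 ^ (t + 1)) ≤ (1 - u) ^ m :=
          pow_le_pow_of_le_one h1u.le (by linarith) hm
      _ ≤ P := by
          have h1 : (∏ _i : Fin m, (1 - u)) ≤ P :=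
            Finset.prod_le_prod (fun i _ => h1u.le) (fun i _ => hfac_lo i)
          simpa using h1
  set N : ℕ := 2 ^ t with hN
  have hNpos : (0:ℝ) < (N:ℝ) := by positivity
  have hexp : 2 ^ (t + 1) = 2 * N := by rw [hN, pow_succ]; ring
  set θ : ℝ := P ^ ((N:ℝ)⁻¹) - 1 with hθ
  have hkey : (1 + θ) = P ^ ((N:ℝ)⁻¹) := by rw [hθ]; ring
  have hrpow_pow : ∀ x : ℝ, 0 ≤ x → ((x ^ (2 * N) : ℝ)) ^ ((N:ℝ)⁻¹) = x ^ 2 := by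
    intro x hx
    rw [pow_mul, ← Real.rpow_natCast (x ^ 2) N, ← Real.rpow_mul (by positivity),
      mul_inv_cancel₀ hNpos.ne']
    exact Real.rpow_one _
  have hhi : P ^ ((N:ℝ)⁻¹) ≤ (1 + u) ^ 2 := by
    have := Real.rpow_le_rpow hP0.le (hexp ▸ hPhi) (inv_nonneg.mpr hNpos.le)
    rwa [hrpow_pow (1 + u) (by linarith)] at this
  have hlo : (1 - u) ^ 2 ≤ P ^ ((N:ℝ)⁻¹) := by
    have := Real.rpow_le_rpow (by positivity) (hexp ▸ hPlo) (inv_nonneg.mpr hNpos.le)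
    rwa [hrpow_pow (1 - u) h1u.le] at this
  refine ⟨θ, ?_, ?_⟩
  · have h2u : (0:ℝ) < 1 - 2 * u := by linarith
    rw [abs_le]
    have hA : 2 * u - u ^ 2 ≤ 2 * u / (1 - 2 * u) := by
      rw [le_div_iff₀ h2u]; nlinarith
    have hB : 2 * u + u ^ 2 ≤ 2 * u / (1 - 2 * u) := by
      rw [le_div_iff₀ h2u]; nlinarith
    constructor
    · have h : (1 - u) ^ 2 - 1 ≤ θ := by rw [hθ]; linarith
      nlinarith
    · have h : θ ≤ (1 + u) ^ 2 - 1 := by rw [hθ]; linarith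
      nlinarith
  · rw [hkey, ← Real.rpow_natCast (P ^ ((N:ℝ)⁻¹)) N, ← Real.rpow_mul hP0.le,
      inv_mul_cancel₀ hNpos.ne', Real.rpow_one]
end

section
/- Let a be a real number with 1 ≤ a < 4, and define the sequence (x_k) by x_0 = 5/2 and x_{k+1} = (x_k + a/x_k)/2 for all k ≥ 0. Then for every k ∈ ℕ one has 0 < (x_k − √a)/√a ≤ 3/2^{k+1}. -/
/-- Hero's method, exact-arithmetic convergence (Example `square_root`):
for `1 ≤ a < 4` and `x₀ = 5/2`, `x_{k+1} = (x_k + a/x_k)/2`, one has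
`0 < (x_k − √a)/√a ≤ 3/2^{k+1}` for all `k`. -/
theorem hero_convergence (a : ℝ) (ha1 : 1 ≤ a) (ha4 : a < 4)
    (x : ℕ → ℝ) (hx0 : x 0 = 5 / 2)
    (hrec : ∀ k, x (k + 1) = (x k + a / x k) / 2) :
    ∀ k : ℕ, 0 < (x k - Real.sqrt a) / Real.sqrt a ∧
      (x k - Real.sqrt a) / Real.sqrt a ≤ 3 / 2 ^ (k + 1) := by
  set s := Real.sqrt a with hsdef
  have hs1 : 1 ≤ s := Real.one_le_sqrt.mpr ha1
  have hs0 : 0 < s := by linarith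
  have hs2 : s < 2 := by
    have : s < Real.sqrt 4 := Real.sqrt_lt_sqrt (by linarith) ha4
    have h4 : Real.sqrt 4 = 2 := by
      rw [show (4:ℝ) = 2^2 by norm_num, Real.sqrt_sq (by norm_num)]
    linarith [h4 ▸ this]
  have hss : s * s = a := Real.mul_self_sqrt (by linarith)
  have key : ∀ k, s < x k ∧ (x k - s) / s ≤ 3 / 2 ^ (k + 1) := by
    intro k
    induction k with
    | zero =>
      rw [hx0]
      constructor
      · linarith
      · rw [div_le_iff₀ hs0]
        norm_num
        nlinarith
    | succ k ih =>
      obtain ⟨h1, h2⟩ := ih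
      have hd : 0 < x k := lt_trans hs0 h1
      rw [hrec]
      set y := a / x k with hydef
      have hxy : x k * y = s * s := by
        rw [hydef, mul_div_cancel₀ _ hd.ne', hss]
      set p := (3:ℝ) / 2 ^ (k + 1) with hpdef
      have hp : 0 < p := by positivity
      have h2' : x k - s ≤ p * s := by
        rw [div_le_iff₀ hs0] at h2
        exact h2
      have hJ : (0:ℝ) ≤ x k - s := by linarith
      have hq : x k * x k + s * s ≤ (p * s + 2 * s) * x k := by
        nlinarith [mul_le_mul_of_nonneg_left h2' hJ, mul_nonneg (mul_nonneg hp.le hs0.le) hs0.le]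
      have hsum : x k + y ≤ p * s + 2 * s := by
        have hmul : x k * (x k + y) ≤ x k * (p * s + 2 * s) := by
          nlinarith
        exact le_of_mul_le_mul_left hmul hd
      have hsum' : 2 * s < x k + y := by
        have hmul : x k * (2 * s) < x k * (x k + y) := by
          nlinarith [mul_pos (sub_pos.mpr h1) (sub_pos.mpr h1)]
        exact lt_of_mul_lt_mul_left hmul hd.le
      have hphalf : (3:ℝ) / 2 ^ (k + 1 + 1) = p / 2 := by
        rw [hpdef, pow_succ]
        ring
      constructor
      · linarith
      · rw [hphalf, div_le_iff₀ hs0]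
        linarith
  intro k
  obtain ⟨h1, h2⟩ := key k
  exact ⟨div_pos (sub_pos.mpr h1) hs0, h2⟩
end

section
/- Let a be a real number with 1 ≤ a < 4, define x_0 = 5/2 and x_{k+1} = (x_k + a/x_k)/2, and let ε be a real number with 0 < ε ≤ 1. If k is a natural number with k ≥ log₂(1/ε) + 2, then (x_k − √a)/√a < ε. -/
/-- Hero's method, iteration count (eq. `sq-root`): for `1 ≤ a < 4`,
`0 < ε ≤ 1`, if `k ≥ log₂(1/ε) + 2` then the `k`-th Hero iterate has
relative error below `ε`. -/
theorem hero_iterations (a : ℝ) (ha1 : 1 ≤ a) (ha4 : a < 4)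
    (x : ℕ → ℝ) (hx0 : x 0 = 5 / 2)
    (hrec : ∀ k, x (k + 1) = (x k + a / x k) / 2)
    (ε : ℝ) (hε0 : 0 < ε) (hε1 : ε ≤ 1)
    (k : ℕ) (hk : Real.logb 2 (1 / ε) + 2 ≤ (k : ℝ)) :
    (x k - Real.sqrt a) / Real.sqrt a < ε := by
  set s := Real.sqrt a with hs
  have hs1 : 1 ≤ s := by
    rw [hs, show (1:ℝ) = Real.sqrt 1 from Real.sqrt_one.symm]
    exact Real.sqrt_le_sqrt ha1
  have hs0 : 0 < s := by linarith
  have hsq : s ^ 2 = a := Real.sq_sqrt (by linarith)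
  have hs2 : s < 2 := by nlinarith
  have key : ∀ n, s ≤ x n ∧ x n - s ≤ (3/2) / 2 ^ n := by
    intro n
    induction n with
    | zero =>
      constructor <;> simp [hx0] <;> linarith
    | succ n ih =>
      obtain ⟨h1, h2⟩ := ih
      have hxp : 0 < x n := lt_of_lt_of_le hs0 h1
      have heq : x (n + 1) - s = (x n - s) ^ 2 / (2 * x n) := by
        rw [hrec]
        field_simp
        nlinarith [hsq]
      constructor
      · have : 0 ≤ (x n - s) ^ 2 / (2 * x n) := by positivity
        linarith [heq]
      · have hle : (x n - s) ^ 2 / (2 * x n) ≤ (x n - s) / 2 := by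
          rw [div_le_div_iff₀ (by linarith) (by norm_num)]
          nlinarith
        have heq2 : (3/2 : ℝ) / 2 ^ (n + 1) = ((3/2 : ℝ) / 2 ^ n) / 2 := by
          rw [pow_succ]; ring
        have : (x n - s) / 2 ≤ (3/2) / 2 ^ (n + 1) := by
          linarith [heq2]
        linarith [heq]
  obtain ⟨h1, h2⟩ := key k
  -- 2^k ≥ 4/ε
  have hlog : (2:ℝ) ^ Real.logb 2 (1/ε) ≤ (2:ℝ) ^ ((k:ℝ) - 2) :=
    Real.rpow_le_rpow_of_exponent_le (by norm_num) (by linarith)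
  rw [Real.rpow_logb (by norm_num) (by norm_num) (by positivity)] at hlog
  have hsub : (2:ℝ) ^ ((k:ℝ) - 2) = (2:ℝ) ^ (k:ℝ) / 4 := by
    rw [Real.rpow_sub (by norm_num)]
    norm_num
  rw [hsub, Real.rpow_natCast] at hlog
  have hpk : (0:ℝ) < 2 ^ k := by positivity
  -- 1/ε ≤ 2^k / 4  ⇒  3/2 / 2^k ≤ 3ε/8 < ε
  have h3 : (3/2) / 2 ^ k < ε := by
    rw [div_lt_iff₀ hpk]
    rw [div_le_div_iff₀ hε0 (by norm_num)] at hlog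
    nlinarith
  have h4 : (x k - s) / s ≤ x k - s :=
    div_le_self (by linarith) hs1
  linarith
end

section
/- Let t ≥ 1 be an integer, let u ≥ 0 be a real with (2t+1)·u < 1, let d_1, …, d_t ∈ {0,1}, and let ε_1, …, ε_t and ε'_1, …, ε'_t be reals of absolute value at most u. Define p_1 = (1/2)(1+ε_1) and p_i = (p_{i−1}/2)(1+ε_i) for 2 ≤ i ≤ t; define s_0 = 0 and, for 1 ≤ i ≤ t, s_i = s_{i−1} if d_i = 0 and s_i = (s_{i−1} + p_i)(1+ε'_i) if d_i = 1. Then there exists a real θ with |θ| ≤ γ_{2t+1} such that s_t = (∑_{i=1}^t d_i·2^{−i})(1+θ). -/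
/-!
Each computed quantity is an exact one multiplied by a factor from the band
`[(1 - u)^n, (1 + u)^n]`, where `n` counts the rounding errors it has accumulated. Bands
multiply, `[(1-u)^m, (1+u)^m] · [(1-u)^n, (1+u)^n] ⊆ [(1-u)^(m+n), (1+u)^(m+n)]`, and,
being convex, they are preserved by sums of nonnegative terms. The power `p i` carries
`i` errors and the partial sum `s i` at most `2 i`, so `s t` is the exact mantissa times a
factor in the band of order `2 t + 1`. Finally Bernoulli's inequality bounds the distance of
any such factor to `1` by `γ_n = n u / (1 - n u)`.
-/

open Set Pointwise

noncomputable def gamma (n : ℕ) (u : ℝ) : ℝ := n * u / (1 - n * u)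

def errorBand (u : ℝ) (n : ℕ) : Set ℝ := Icc ((1 - u) ^ n) ((1 + u) ^ n)

namespace errorBand

variable {u : ℝ} {m n : ℕ}

theorem one_add_mem {δ : ℝ} (h : |δ| ≤ u) : 1 + δ ∈ errorBand u 1 := by
  obtain ⟨hl, hr⟩ := abs_le.mp h
  constructor <;> simp only [pow_one] <;> linarith

theorem one_mem_zero : (1 : ℝ) ∈ errorBand u 0 := by
  simp [errorBand]

theorem mono (hu₀ : 0 ≤ u) (hu₁ : u ≤ 1) (h : m ≤ n) : errorBand u m ⊆ errorBand u n :=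
  Icc_subset_Icc (pow_le_pow_of_le_one (by linarith) (by linarith) h)
    (pow_le_pow_right₀ (by linarith) h)

theorem mul_mem (hu₁ : u ≤ 1) {x y : ℝ} (hx : x ∈ errorBand u m) (hy : y ∈ errorBand u n) :
    x * y ∈ errorBand u (m + n) := by
  have hm : 0 ≤ (1 - u) ^ m := pow_nonneg (by linarith) m
  have hn : 0 ≤ (1 - u) ^ n := pow_nonneg (by linarith) n
  rw [errorBand, pow_add, pow_add]
  exact ⟨mul_le_mul hx.1 hy.1 hn (hm.trans hx.1),
    mul_le_mul hx.2 hy.2 (hn.trans hy.1) (hm.trans (hx.1.trans hx.2))⟩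

theorem mul_mem_smul (hu₁ : u ≤ 1) {a x y : ℝ} (hx : x ∈ a • errorBand u m)
    (hy : y ∈ errorBand u n) : x * y ∈ a • errorBand u (m + n) := by
  obtain ⟨z, hz, rfl⟩ := hx
  exact ⟨z * y, mul_mem hu₁ hz hy, by simp only [smul_eq_mul, mul_assoc]⟩

theorem convex : Convex ℝ (errorBand u n) := convex_Icc _ _

theorem add_mem_smul {a b x y : ℝ} (ha : 0 ≤ a) (hb : 0 ≤ b) (hx : x ∈ a • errorBand u n)
    (hy : y ∈ b • errorBand u n) : x + y ∈ (a + b) • errorBand u n := by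
  rw [convex.add_smul ha hb]
  exact add_mem_add hx hy

theorem abs_sub_one_le_gamma (hu₀ : 0 ≤ u) (hu₁ : u ≤ 1) (hnu : n * u < 1) {x : ℝ}
    (hx : x ∈ errorBand u n) : |x - 1| ≤ gamma n u := by
  have hpos : 0 < 1 - n * u := by linarith
  have hbernoulli : 1 - n * u ≤ (1 - u) ^ n := by
    simpa [sub_eq_add_neg] using one_add_mul_le_pow (a := -u) (by linarith) n
  have hle_gamma : n * u ≤ gamma n u := by
    rw [gamma, le_div_iff₀ hpos]
    nlinarith [mul_nonneg (Nat.cast_nonneg n) hu₀]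
  -- `(1 + u)(1 - u) ≤ 1` turns the lower Bernoulli bound into an upper one.
  have hupper : (1 + u) ^ n * (1 - n * u) ≤ 1 :=
    calc (1 + u) ^ n * (1 - n * u) ≤ (1 + u) ^ n * (1 - u) ^ n :=
          mul_le_mul_of_nonneg_left hbernoulli (by positivity)
      _ = (1 - u ^ 2) ^ n := by rw [← mul_pow]; ring
      _ ≤ 1 := pow_le_one₀ (by nlinarith) (by nlinarith)
  rw [abs_le]
  constructor
  · linarith [hx.1]
  · rw [gamma, le_div_iff₀ hpos]
    nlinarith [hx.2]

end errorBand

section MantissaEvaluation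

variable {t : ℕ} {u : ℝ} {d ε ε' p s : ℕ → ℝ}

theorem two_zpow_neg_succ (i : ℕ) : (2 : ℝ) ^ (-((i + 1 : ℕ) : ℤ)) = 2 ^ (-(i : ℤ)) / 2 := by
  rw [Nat.cast_succ, neg_add, zpow_add₀ two_ne_zero, zpow_neg_one, div_eq_mul_inv]

theorem halvings_mem_smul_errorBand (hu₁ : u ≤ 1)
    (hε : ∀ i, 1 ≤ i → i ≤ t → |ε i| ≤ u)
    (hp1 : p 1 = (1 / 2) * (1 + ε 1))
    (hpi : ∀ i, 2 ≤ i → i ≤ t → p i = (p (i - 1) / 2) * (1 + ε i)) :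
    ∀ i, 1 ≤ i → i ≤ t → p i ∈ (2 : ℝ) ^ (-(i : ℤ)) • errorBand u i := by
  intro i hi
  induction i, hi using Nat.le_induction with
  | base =>
    intro h1t
    exact ⟨_, errorBand.one_add_mem (hε 1 le_rfl h1t), by rw [hp1]; norm_num⟩
  | succ i _ ih =>
    intro hit
    obtain ⟨z, hz, hpz⟩ := mem_smul_set.mp (ih (by omega))
    refine mem_smul_set.mpr ⟨z * (1 + ε (i + 1)),
      errorBand.mul_mem hu₁ hz (errorBand.one_add_mem (hε _ (by omega) hit)), ?_⟩
    rw [hpi (i + 1) (by omega) hit, Nat.add_sub_cancel, ← hpz, two_zpow_neg_succ,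
      smul_eq_mul, smul_eq_mul]
    ring

theorem partialSums_mem_smul_errorBand (hu₀ : 0 ≤ u) (hu₁ : u ≤ 1)
    (hd : ∀ i, 1 ≤ i → i ≤ t → d i = 0 ∨ d i = 1)
    (hε' : ∀ i, 1 ≤ i → i ≤ t → |ε' i| ≤ u)
    (hp : ∀ i, 1 ≤ i → i ≤ t → p i ∈ (2 : ℝ) ^ (-(i : ℤ)) • errorBand u i)
    (hs0 : s 0 = 0)
    (hsi : ∀ i, 1 ≤ i → i ≤ t →
      (d i = 0 → s i = s (i - 1)) ∧
      (d i = 1 → s i = (s (i - 1) + p i) * (1 + ε' i))) :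
    ∀ i ≤ t, s i ∈ (∑ j ∈ Finset.Icc 1 i, d j * (2 : ℝ) ^ (-(j : ℤ))) • errorBand u (2 * i) := by
  intro i
  induction i with
  | zero => exact fun _ ↦ ⟨1, errorBand.one_mem_zero, by simp [hs0]⟩
  | succ i ih =>
    intro hit
    have hsum := Finset.sum_Icc_succ_top (by omega : 1 ≤ i + 1)
      (fun j ↦ d j * (2 : ℝ) ^ (-(j : ℤ)))
    obtain ⟨hs_skip, hs_add⟩ := hsi (i + 1) (by omega) hit
    rcases hd (i + 1) (by omega) hit with hdi | hdi
    · rw [hs_skip hdi, Nat.add_sub_cancel, hsum, hdi, zero_mul, add_zero]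
      exact smul_set_mono (errorBand.mono hu₀ hu₁ (by omega)) (ih (by omega))
    · have hweights : 0 ≤ ∑ j ∈ Finset.Icc 1 i, d j * (2 : ℝ) ^ (-(j : ℤ)) := by
        refine Finset.sum_nonneg fun j hj ↦ ?_
        obtain ⟨hj₁, hj₂⟩ := Finset.mem_Icc.mp hj
        rcases hd j hj₁ (by omega) with h | h <;> rw [h] <;> positivity
      rw [hs_add hdi, Nat.add_sub_cancel, hsum, hdi, one_mul,
        show 2 * (i + 1) = (2 * i + 1) + 1 by ring]
      refine errorBand.mul_mem_smul hu₁ (errorBand.add_mem_smul hweights (by positivity) ?_ ?_)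
        (errorBand.one_add_mem (hε' _ (by omega) hit))
      · exact smul_set_mono (errorBand.mono hu₀ hu₁ (by omega)) (ih (by omega))
      · exact smul_set_mono (errorBand.mono hu₀ hu₁ (by omega)) (hp _ (by omega) hit)

end MantissaEvaluation

theorem mantissa_evaluation_general (t : ℕ) (u : ℝ) (hu : 0 ≤ u)
    (htu : (2 * (t : ℝ) + 1) * u < 1)
    (d : ℕ → ℝ) (hd : ∀ i, 1 ≤ i → i ≤ t → d i = 0 ∨ d i = 1)
    (ε ε' : ℕ → ℝ)
    (hε : ∀ i, 1 ≤ i → i ≤ t → |ε i| ≤ u)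
    (hε' : ∀ i, 1 ≤ i → i ≤ t → |ε' i| ≤ u)
    (p s : ℕ → ℝ)
    (hp1 : p 1 = (1 / 2) * (1 + ε 1))
    (hpi : ∀ i, 2 ≤ i → i ≤ t → p i = (p (i - 1) / 2) * (1 + ε i))
    (hs0 : s 0 = 0)
    (hsi : ∀ i, 1 ≤ i → i ≤ t →
      (d i = 0 → s i = s (i - 1)) ∧
      (d i = 1 → s i = (s (i - 1) + p i) * (1 + ε' i))) :
    ∃ θ : ℝ,
      |θ| ≤ (2 * (t : ℝ) + 1) * u / (1 - (2 * (t : ℝ) + 1) * u) ∧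
      s t = (∑ i ∈ Finset.Icc 1 t, d i * (2 : ℝ) ^ (-(i : ℤ))) * (1 + θ) := by
  have hu₁ : u ≤ 1 := by nlinarith [(Nat.cast_nonneg t : (0 : ℝ) ≤ t)]
  have hp := halvings_mem_smul_errorBand hu₁ hε hp1 hpi
  obtain ⟨z, hz, hst⟩ := mem_smul_set.mp <| smul_set_mono (errorBand.mono hu hu₁ (Nat.le_succ _))
    (partialSums_mem_smul_errorBand hu hu₁ hd hε' hp hs0 hsi t le_rfl)
  refine ⟨z - 1, ?_, ?_⟩
  · have hz_close := errorBand.abs_sub_one_le_gamma hu hu₁ (by push_cast; exact htu) hz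
    simpa [gamma] using hz_close
  · rw [← hst, smul_eq_mul]
    ring

/-- Finite-precision evaluation of a binary mantissa `m = 0.d₁d₂…d_t` (proof
of Proposition `grid`): each power `2^{−i}` is obtained from `2^{−(i−1)}` by
one division, and added to the partial sum when `dᵢ = 1`, every operation
incurring a relative rounding error of magnitude at most `u`; the computed
mantissa equals the exact one up to relative error `γ_{2t+1}`. -/
theorem mantissa_evaluation (t : ℕ) (ht : 1 ≤ t) (u : ℝ) (hu : 0 ≤ u)
    (htu : (2 * (t : ℝ) + 1) * u < 1)
    (d : ℕ → ℝ) (hd : ∀ i, 1 ≤ i → i ≤ t → d i = 0 ∨ d i = 1)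
    (ε ε' : ℕ → ℝ)
    (hε : ∀ i, 1 ≤ i → i ≤ t → |ε i| ≤ u)
    (hε' : ∀ i, 1 ≤ i → i ≤ t → |ε' i| ≤ u)
    (p s : ℕ → ℝ)
    (hp1 : p 1 = (1 / 2) * (1 + ε 1))
    (hpi : ∀ i, 2 ≤ i → i ≤ t → p i = (p (i - 1) / 2) * (1 + ε i))
    (hs0 : s 0 = 0)
    (hsi : ∀ i, 1 ≤ i → i ≤ t →
      (d i = 0 → s i = s (i - 1)) ∧
      (d i = 1 → s i = (s (i - 1) + p i) * (1 + ε' i))) :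
    ∃ θ : ℝ,
      |θ| ≤ (2 * (t : ℝ) + 1) * u / (1 - (2 * (t : ℝ) + 1) * u) ∧
      s t = (∑ i ∈ Finset.Icc 1 t, d i * (2 : ℝ) ^ (-(i : ℤ))) * (1 + θ) :=
  mantissa_evaluation_general t u hu htu d hd ε ε' hε hε' p s hp1 hpi hs0 hsi
end
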